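/- arXiv:2308.12183 — 2 statements merged into one kernel-verified Lean document; each statement's English description precedes it below -/
import Mathlib

section
/- For any point x in the Sierpiński gasket SG and any n ∈ ℕ, the ball B(x, 2^{-(n+1)}) in Euclidean distance intersects the vertex set of SG_n in at least one and at most two points. -/
open Filter MeasureTheory Metric Set

noncomputable section

/-- The plane with the Euclidean metric. -/
abbrev E2 : Type := EuclideanSpace ℝ (Fin 2)

/-- The corners of the unit equilateral triangle. -/
def gasketVertex : Fin 3 → E2
  | 0 => !₂[0, 0]
  | 1 => !₂[1, 0]
  | 2 => !₂[1 / 2, Real.sqrt 3 / 2]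

/-- The contraction `ψ_i(x) = (x - u_i)/2 + u_i`. -/
def gasketMap (i : Fin 3) (x : E2) : E2 :=
  (1 / 2 : ℝ) • (x - gasketVertex i) + gasketVertex i

/-- For a word `w = [w₁, ..., wₘ]`, the composition `ψ_w = ψ_{wₘ} ∘ ... ∘ ψ_{w₁}`. -/
def gasketWordMap (w : List (Fin 3)) (x : E2) : E2 :=
  w.foldl (fun p i => gasketMap i p) x

/-- The vertex set of the level-`n` approximation graph `SG_n`. -/
def gasketVertices (n : ℕ) : Set E2 :=
  ⋃ w ∈ {w : List (Fin 3) | w.length = n},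
    gasketWordMap w '' {gasketVertex 0, gasketVertex 1, gasketVertex 2}

/-! Each `ψ_i` is a `1/2`-contraction mapping the triangle `T = conv {u₁, u₂, u₃}` into itself,
so the compact attractor `SG` lies in `T`, whose points are within distance `1` of every corner.
Writing `x = ψ_w (ψ_i y)` with `|w| = n` and `y ∈ SG`, the vertex `ψ_w u_i = ψ_w (ψ_i u_i)` of
`SG_n` is within `dist y u_i / 2^(n+1) ≤ 2^(-(n+1))` of `x`.

Conversely, `V_n` lies in the triangular lattice `2⁻ⁿ (ℤ u₂ + ℤ u₃)`, whose distinct points are at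
least `2⁻ⁿ` apart because `a² + ab + b² ≥ 1` for integers `(a, b) ≠ 0`. In the strictly convex
plane, a point of a closed ball of radius `r` determines every other point of the ball at distance
`≥ 2r` from it (its reflection in the centre), so the ball meets `V_n` in at most two points. -/

open scoped NNReal

section Attractor

variable {X : Type*} [MetricSpace X]

theorem infDist_le_mul_infDist_of_mapsTo {f : X → X} {K : ℝ≥0} {T : Set X}
    (hf : LipschitzWith K f) (hfT : MapsTo f T T) (hT : T.Nonempty) (y : X) :
    infDist (f y) T ≤ K * infDist y T := by
  have hbound : ∀ t ∈ T, infDist (f y) T ≤ K * dist y t := fun t ht =>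
    (infDist_le_dist_of_mem (hfT ht)).trans (hf.dist_le_mul y t)
  rcases eq_or_ne K 0 with rfl | hK
  · obtain ⟨t, ht⟩ := hT
    simpa using hbound t ht
  · have hKpos : (0 : ℝ) < K := by positivity
    rw [← div_le_iff₀' hKpos]
    exact (le_infDist hT).2 fun t ht => (div_le_iff₀' hKpos).2 (hbound t ht)

theorem subset_of_eq_iUnion_image {ι : Type*} {f : ι → X → X} {K : ℝ≥0} (hK : K < 1)
    (hf : ∀ i, LipschitzWith K (f i)) {S T : Set X} (hS : IsCompact S)
    (hSf : S = ⋃ i, f i '' S) (hT : IsClosed T) (hTne : T.Nonempty)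
    (hfT : ∀ i, MapsTo (f i) T T) : S ⊆ T := by
  rcases S.eq_empty_or_nonempty with rfl | hSne
  · exact empty_subset T
  obtain ⟨x₀, hx₀, hmax⟩ :=
    hS.exists_isMaxOn hSne (continuous_infDist_pt T).continuousOn
  have hx₀T : infDist x₀ T ≤ 0 := by
    obtain ⟨i, y, hy, rfl⟩ : ∃ i, ∃ y ∈ S, f i y = x₀ := by
      rw [hSf] at hx₀; simpa using hx₀
    have := (infDist_le_mul_infDist_of_mapsTo (hf i) (hfT i) hTne y).trans
      (mul_le_mul_of_nonneg_left (hmax hy) K.coe_nonneg)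
    nlinarith [infDist_nonneg (x := f i y) (s := T), (NNReal.coe_lt_coe.2 hK)]
  intro x hx
  rw [hT.mem_iff_infDist_zero hTne]
  exact le_antisymm ((hmax hx).trans hx₀T) infDist_nonneg

end Attractor

section StrictConvex

variable {F : Type*} [NormedAddCommGroup F] [NormedSpace ℝ F] [StrictConvexSpace ℝ F]

theorem midpoint_eq_of_two_mul_le_dist {a b x : F} {r : ℝ} (ha : dist a x ≤ r)
    (hb : dist x b ≤ r) (hab : 2 * r ≤ dist a b) : midpoint ℝ a b = x := by
  have htri := dist_triangle a x b
  exact (eq_midpoint_of_dist_eq_half (by linarith) (by linarith)).symm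

theorem encard_inter_closedBall_le_two {s : Set F} {r : ℝ}
    (hs : ∀ a ∈ s, ∀ b ∈ s, a ≠ b → 2 * r ≤ dist a b) (x : F) :
    (s ∩ closedBall x r).encard ≤ 2 := by
  rcases (s ∩ closedBall x r).eq_empty_or_nonempty with h | ⟨v, hvs, hvx⟩
  · simp [h]
  have hsub : s ∩ closedBall x r ⊆ {v, Equiv.pointReflection x v} := by
    rintro b ⟨hbs, hbx⟩
    rcases eq_or_ne v b with rfl | hvb
    · exact mem_insert _ _
    · refine mem_insert_of_mem _ ((midpoint_eq_iff' ℝ).1 ?_).symm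
      rw [mem_closedBall] at hvx hbx
      exact midpoint_eq_of_two_mul_le_dist hvx (dist_comm x b ▸ hbx) (hs v hvs b hbs hvb)
  calc (s ∩ closedBall x r).encard ≤ ({v, Equiv.pointReflection x v} : Set F).encard :=
        encard_le_encard hsub
    _ ≤ 2 := (encard_insert_le _ _).trans (by norm_num)

end StrictConvex

theorem dist_sq_eq_E2 (p q : E2) : dist p q ^ 2 = (p 0 - q 0) ^ 2 + (p 1 - q 1) ^ 2 := by
  rw [EuclideanSpace.dist_sq_eq, Fin.sum_univ_two, Real.dist_eq, Real.dist_eq, sq_abs, sq_abs]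

theorem gasketMap_sub_gasketMap (i : Fin 3) (a b : E2) :
    gasketMap i a - gasketMap i b = (1 / 2 : ℝ) • (a - b) := by
  simp only [gasketMap]; module

theorem dist_gasketMap (i : Fin 3) (a b : E2) :
    dist (gasketMap i a) (gasketMap i b) = dist a b / 2 := by
  rw [dist_eq_norm, gasketMap_sub_gasketMap, norm_smul, dist_eq_norm,
    Real.norm_of_nonneg (by norm_num)]
  ring

theorem lipschitzWith_gasketMap (i : Fin 3) : LipschitzWith (1 / 2) (gasketMap i) :=
  LipschitzWith.of_dist_le_mul fun a b => by
    rw [dist_gasketMap]; push_cast; linarith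

theorem gasketMap_gasketVertex (i : Fin 3) : gasketMap i (gasketVertex i) = gasketVertex i := by
  simp [gasketMap]

theorem gasketWordMap_cons (i : Fin 3) (w : List (Fin 3)) (x : E2) :
    gasketWordMap (i :: w) x = gasketWordMap w (gasketMap i x) := rfl

theorem gasketWordMap_concat (w : List (Fin 3)) (i : Fin 3) (x : E2) :
    gasketWordMap (w ++ [i]) x = gasketMap i (gasketWordMap w x) := by
  simp [gasketWordMap]

theorem dist_gasketWordMap (w : List (Fin 3)) (a b : E2) :
    dist (gasketWordMap w a) (gasketWordMap w b) = dist a b / 2 ^ w.length := by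
  induction w generalizing a b with
  | nil => simp [gasketWordMap]
  | cons i w ih =>
    rw [gasketWordMap_cons, gasketWordMap_cons, ih, dist_gasketMap, List.length_cons, pow_succ,
      div_div, mul_comm]

theorem dist_gasketVertex_le_one (i j : Fin 3) : dist (gasketVertex i) (gasketVertex j) ≤ 1 := by
  have h3 : Real.sqrt 3 ^ 2 = 3 := Real.sq_sqrt (by norm_num)
  rw [← sq_le_one_iff₀ dist_nonneg, dist_sq_eq_E2]
  fin_cases i <;> fin_cases j <;> norm_num [gasketVertex, div_pow, h3]

def gasketTriangle : Set E2 := convexHull ℝ (range gasketVertex)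

theorem dist_gasketVertex_le_one_of_mem_gasketTriangle {y : E2} (hy : y ∈ gasketTriangle)
    (i : Fin 3) : dist y (gasketVertex i) ≤ 1 := by
  have hsub : gasketTriangle ⊆ closedBall (gasketVertex i) 1 :=
    convexHull_min (range_subset_iff.2 fun j => dist_gasketVertex_le_one j i)
      (convex_closedBall _ _)
  exact hsub hy

theorem mapsTo_gasketMap_gasketTriangle (i : Fin 3) :
    MapsTo (gasketMap i) gasketTriangle gasketTriangle := by
  intro y hy
  have hyi : gasketMap i y = (1 / 2 : ℝ) • y + (1 / 2 : ℝ) • gasketVertex i := by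
    simp only [gasketMap]; module
  rw [hyi]
  exact convex_convexHull ℝ _ hy (subset_convexHull ℝ _ (mem_range_self i))
    (by norm_num) (by norm_num) (by norm_num)

theorem isClosed_gasketTriangle : IsClosed gasketTriangle :=
  ((finite_range gasketVertex).isCompact_convexHull ℝ).isClosed

theorem gasketTriangle_nonempty : gasketTriangle.Nonempty :=
  ⟨gasketVertex 0, subset_convexHull ℝ _ (mem_range_self 0)⟩

theorem subset_gasketTriangle {SG : Set E2} (hcpt : IsCompact SG)
    (hattr : SG = ⋃ i : Fin 3, gasketMap i '' SG) : SG ⊆ gasketTriangle :=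
  subset_of_eq_iUnion_image (by norm_num) lipschitzWith_gasketMap hcpt hattr
    isClosed_gasketTriangle gasketTriangle_nonempty mapsTo_gasketMap_gasketTriangle

theorem exists_gasketWordMap_eq {SG : Set E2} (hattr : SG = ⋃ i : Fin 3, gasketMap i '' SG)
    (n : ℕ) {x : E2} (hx : x ∈ SG) :
    ∃ w : List (Fin 3), w.length = n ∧ ∃ y ∈ SG, gasketWordMap w y = x := by
  induction n generalizing x with
  | zero => exact ⟨[], rfl, x, hx, rfl⟩
  | succ n ih =>
    obtain ⟨i, z, hz, rfl⟩ : ∃ i, ∃ z ∈ SG, gasketMap i z = x := by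
      rw [hattr] at hx; simpa using hx
    obtain ⟨w, hw, y, hy, rfl⟩ := ih hz
    exact ⟨w ++ [i], by simp [hw], y, hy, gasketWordMap_concat w i y⟩

theorem exists_mem_gasketVertices_dist_le {SG : Set E2} (hcpt : IsCompact SG)
    (hattr : SG = ⋃ i : Fin 3, gasketMap i '' SG) {x : E2} (hx : x ∈ SG) (n : ℕ) :
    ∃ v ∈ gasketVertices n, dist x v ≤ ((2 : ℝ) ^ (n + 1))⁻¹ := by
  obtain ⟨_ | ⟨i, w⟩, hw, y, hy, rfl⟩ := exists_gasketWordMap_eq hattr (n + 1) hx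
  · simp at hw
  refine ⟨gasketWordMap w (gasketVertex i), ?_, ?_⟩
  · simp only [gasketVertices, mem_iUnion]
    refine ⟨w, by simpa using hw, gasketVertex i, ?_, rfl⟩
    fin_cases i <;> simp
  · have hyi :=
      dist_gasketVertex_le_one_of_mem_gasketTriangle (subset_gasketTriangle hcpt hattr hy) i
    rw [← gasketMap_gasketVertex i, ← gasketWordMap_cons, dist_gasketWordMap, hw, div_eq_mul_inv]
    exact mul_le_of_le_one_left (by positivity) hyi

/-- The points `2⁻ⁿ (a u₂ + b u₃)` with `a b : ℤ`, where `u₂ = (1, 0)`, `u₃ = (1/2, √3/2)`. -/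
def triLattice (n : ℕ) : Set E2 :=
  {p | ∃ a b : ℤ, p 0 = (a + b / 2) / 2 ^ n ∧ p 1 = b * (Real.sqrt 3 / 2) / 2 ^ n}

theorem gasketVertex_mem_triLattice_zero (i : Fin 3) : gasketVertex i ∈ triLattice 0 := by
  fin_cases i
  · exact ⟨0, 0, by norm_num [gasketVertex], by norm_num [gasketVertex]⟩
  · exact ⟨1, 0, by norm_num [gasketVertex], by norm_num [gasketVertex]⟩
  · exact ⟨0, 1, by norm_num [gasketVertex], by norm_num [gasketVertex]⟩

theorem gasketMap_mem_triLattice {p : E2} {n : ℕ} (i : Fin 3) (hp : p ∈ triLattice n) :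
    gasketMap i p ∈ triLattice (n + 1) := by
  obtain ⟨a, b, hp0, hp1⟩ := hp
  obtain ⟨c, d, hv0, hv1⟩ := gasketVertex_mem_triLattice_zero i
  have hcoord (j : Fin 2) : gasketMap i p j = (p j + gasketVertex i j) / 2 := by
    simp only [gasketMap, PiLp.add_apply, PiLp.smul_apply, PiLp.sub_apply, smul_eq_mul]; ring
  refine ⟨a + c * 2 ^ n, b + d * 2 ^ n, ?_, ?_⟩
  · rw [hcoord, hp0, hv0]; push_cast; field_simp; ring
  · rw [hcoord, hp1, hv1]; push_cast; field_simp; ring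

theorem gasketWordMap_mem_triLattice (w : List (Fin 3)) {p : E2} {n : ℕ}
    (hp : p ∈ triLattice n) : gasketWordMap w p ∈ triLattice (n + w.length) := by
  induction w generalizing p n with
  | nil => simpa [gasketWordMap] using hp
  | cons i w ih =>
    rw [gasketWordMap_cons, List.length_cons, ← add_assoc, add_right_comm]
    exact ih (gasketMap_mem_triLattice i hp)

theorem gasketVertices_subset_triLattice (n : ℕ) : gasketVertices n ⊆ triLattice n := by
  simp only [gasketVertices, iUnion_subset_iff, image_subset_iff]
  rintro w rfl v (rfl | rfl | rfl) <;>
    simpa using gasketWordMap_mem_triLattice w (gasketVertex_mem_triLattice_zero _)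

theorem one_le_sq_add_mul_add_sq {a b : ℤ} (h : a ≠ 0 ∨ b ≠ 0) : 1 ≤ a ^ 2 + a * b + b ^ 2 := by
  have hpos : 0 < (2 * a + b) ^ 2 + 3 * b ^ 2 := by
    rcases eq_or_ne b 0 with rfl | hb
    · have ha : a ≠ 0 := by simpa using h
      simp only [add_zero]
      positivity
    · positivity
  nlinarith

theorem inv_two_pow_le_dist_of_mem_triLattice {n : ℕ} {p q : E2} (hp : p ∈ triLattice n)
    (hq : q ∈ triLattice n) (hpq : p ≠ q) : ((2 : ℝ) ^ n)⁻¹ ≤ dist p q := by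
  obtain ⟨a, b, hp0, hp1⟩ := hp
  obtain ⟨c, d, hq0, hq1⟩ := hq
  have hne : a - c ≠ 0 ∨ b - d ≠ 0 := by
    by_contra! h
    obtain ⟨rfl, rfl⟩ : a = c ∧ b = d := ⟨by linarith [h.1], by linarith [h.2]⟩
    refine hpq (PiLp.ext fun j => ?_)
    fin_cases j
    · exact hp0.trans hq0.symm
    · exact hp1.trans hq1.symm
  have hnorm : (1 : ℝ) ≤ ((a : ℝ) - c) ^ 2 + ((a : ℝ) - c) * ((b : ℝ) - d) + ((b : ℝ) - d) ^ 2 := by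
    exact_mod_cast one_le_sq_add_mul_add_sq hne
  have h3 : Real.sqrt 3 ^ 2 = 3 := Real.sq_sqrt (by norm_num)
  have hsq : ((2 : ℝ) ^ n)⁻¹ ^ 2 ≤ dist p q ^ 2 := by
    rw [dist_sq_eq_E2, hp0, hp1, hq0, hq1]
    field_simp
    nlinarith [hnorm, h3]
  exact (pow_le_pow_iff_left₀ (by positivity) dist_nonneg two_ne_zero).1 hsq

theorem stmt_10_general (SG : Set E2) (hcpt : IsCompact SG)
    (hattr : SG = ⋃ i : Fin 3, gasketMap i '' SG) :
    ∀ x ∈ SG, ∀ n : ℕ,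
      1 ≤ (gasketVertices n ∩ closedBall x ((2 : ℝ) ^ (-(n + 1) : ℤ))).encard ∧
      (gasketVertices n ∩ closedBall x ((2 : ℝ) ^ (-(n + 1) : ℤ))).encard ≤ 2 := by
  intro x hx n
  have hr : (2 : ℝ) ^ (-(n + 1) : ℤ) = ((2 : ℝ) ^ (n + 1))⁻¹ := by
    rw [← zpow_natCast, ← zpow_neg]; push_cast; rfl
  rw [hr]
  constructor
  · obtain ⟨v, hv, hxv⟩ := exists_mem_gasketVertices_dist_le hcpt hattr hx n
    exact one_le_encard_iff_nonempty.2 ⟨v, hv, mem_closedBall.2 (dist_comm x v ▸ hxv)⟩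
  · refine encard_inter_closedBall_le_two (fun a ha b hb hab => ?_) x
    rw [pow_succ', mul_inv, mul_inv_cancel_left₀ (two_ne_zero' ℝ)]
    exact inv_two_pow_le_dist_of_mem_triLattice (gasketVertices_subset_triLattice n ha)
      (gasketVertices_subset_triLattice n hb) hab

theorem stmt_10 (SG : Set E2) (hne : SG.Nonempty) (hcpt : IsCompact SG)
    (hattr : SG = ⋃ i : Fin 3, gasketMap i '' SG) :
    ∀ x ∈ SG, ∀ n : ℕ,
      1 ≤ (gasketVertices n ∩ closedBall x ((2 : ℝ) ^ (-(n + 1) : ℤ))).encard ∧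
      (gasketVertices n ∩ closedBall x ((2 : ℝ) ^ (-(n + 1) : ℤ))).encard ≤ 2 :=
  stmt_10_general SG hcpt hattr
end
end

section
/- Let G be a finite connected multigraph with sink s. The stabilization of any sandpile configuration is well-defined: any two maximal sequences of legal topplings starting from the same configuration η use each vertex the same number of times and produce the same stable configuration η°. -/
open Finset

variable {V : Type}

/-- Toppling the vertex `v`: it loses `deg v` chips and each neighbour `u`
gains `a u v` chips (one per connecting edge). The sink is `none : Option V`. -/
def topple (a : Option V → Option V → ℕ) (deg : Option V → ℕ)
    [DecidableEq V] (η : V → ℤ) (v : V) : V → ℤ :=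
  fun u => η u - (if u = v then (deg (some v) : ℤ) else 0) + (a (some u) (some v) : ℤ)

/-- Applying a sequence of topplings. -/
def toppleSeq (a : Option V → Option V → ℕ) (deg : Option V → ℕ)
    [DecidableEq V] (η : V → ℤ) (l : List V) : V → ℤ :=
  l.foldl (topple a deg) η

/-- A sequence of topplings is legal if each toppled vertex is unstable at the
moment it is toppled. -/
def LegalSeq (a : Option V → Option V → ℕ) (deg : Option V → ℕ)
    [DecidableEq V] : (V → ℤ) → List V → Prop
  | _, [] => True
  | η, v :: l => (deg (some v) : ℤ) ≤ η v ∧ LegalSeq a deg (topple a deg η v) l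

/-- A configuration is stable if every non-sink vertex has fewer chips than
its degree. -/
def StableConfig (deg : Option V → ℕ) (η : V → ℤ) : Prop :=
  ∀ v : V, η v < (deg (some v) : ℤ)

/-!
Toppling operators commute, so the result of a toppling sequence depends only on how often each
vertex is toppled. Legality is the only delicate point, and it is monotone: toppling `v` never
removes chips from a vertex `u ≠ v`. Hence if `w` is unstable now and the stabilizing sequence `l₁`
topples it at all (it must, since otherwise `w` would still be unstable at the end), the first
occurrence of `w` in `l₁` can be moved to the front without destroying legality. Peeling off the
first vertex of any other legal sequence `l₂` in this way shows that `l₂` is a sub-multiset of `l₁`;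
by symmetry the two are permutations of each other.
-/

section Toppling

variable (a : Option V → Option V → ℕ) (deg : Option V → ℕ) [DecidableEq V]

instance topple_rightCommutative : RightCommutative (topple a deg) where
  right_comm η v w := by funext u; simp only [topple]; ring

theorem toppleSeq_perm {l₁ l₂ : List V} (h : l₁.Perm l₂) (η : V → ℤ) :
    toppleSeq a deg η l₁ = toppleSeq a deg η l₂ :=
  h.foldl_eq η

theorem le_topple_of_ne (η : V → ℤ) {u v : V} (h : u ≠ v) : η u ≤ topple a deg η v u := by
  simp [topple, if_neg h]

theorem le_toppleSeq_of_notMem {u : V} {l : List V} (hu : u ∉ l) (η : V → ℤ) :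
    η u ≤ toppleSeq a deg η l u := by
  induction l generalizing η with
  | nil => exact le_rfl
  | cons w l ih =>
    rw [List.mem_cons, not_or] at hu
    exact (le_topple_of_ne a deg η hu.1).trans (ih hu.2 _)

theorem LegalSeq.topple_of_append_cons {v : V} {l l' : List V} (hv : v ∉ l) {η : V → ℤ}
    (h : LegalSeq a deg η (l ++ v :: l')) : LegalSeq a deg (topple a deg η v) (l ++ l') := by
  induction l generalizing η with
  | nil => exact h.2
  | cons w l ih =>
    rw [List.mem_cons, not_or] at hv
    obtain ⟨hw, hrest⟩ := h
    refine ⟨hw.trans (le_topple_of_ne a deg η (Ne.symm hv.1)), ?_⟩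
    rw [RightCommutative.right_comm (op := topple a deg)]
    exact ih hv.2 hrest

theorem LegalSeq.subperm_of_stable {η : V → ℤ} {l l' : List V} (h : LegalSeq a deg η l)
    (h' : LegalSeq a deg η l') (hs : StableConfig deg (toppleSeq a deg η l')) :
    l.Subperm l' := by
  induction l generalizing η l' with
  | nil => exact List.nil_subperm
  | cons w l ih =>
    obtain ⟨hw, h⟩ := h
    have hmem : w ∈ l' := by
      by_contra hnot
      exact (hs w).not_ge (hw.trans (le_toppleSeq_of_notMem a deg hnot η))
    have hperm : l'.Perm (w :: l'.erase w) := List.perm_cons_erase hmem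
    obtain ⟨la, lb, hw_la, hsplit, herase⟩ := List.exists_erase_eq hmem
    have h'' : LegalSeq a deg (topple a deg η w) (l'.erase w) :=
      herase ▸ (hsplit ▸ h').topple_of_append_cons a deg hw_la
    have hs' : StableConfig deg (toppleSeq a deg (topple a deg η w) (l'.erase w)) := by
      rwa [toppleSeq_perm a deg hperm] at hs
    exact ((List.subperm_cons w).2 (ih h h'' hs')).trans hperm.symm.subperm

end Toppling

theorem stmt_13_general (V : Type) [DecidableEq V]
    (a : Option V → Option V → ℕ)
    (deg : Option V → ℕ)
    (η : V → ℕ) (l₁ l₂ : List V)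
    (h₁ : LegalSeq a deg (fun v => (η v : ℤ)) l₁)
    (h₂ : LegalSeq a deg (fun v => (η v : ℤ)) l₂)
    (hs₁ : StableConfig deg (toppleSeq a deg (fun v => (η v : ℤ)) l₁))
    (hs₂ : StableConfig deg (toppleSeq a deg (fun v => (η v : ℤ)) l₂)) :
    (∀ v : V, l₁.count v = l₂.count v) ∧
    toppleSeq a deg (fun v => (η v : ℤ)) l₁ =
      toppleSeq a deg (fun v => (η v : ℤ)) l₂ := by
  have hperm : l₁.Perm l₂ :=
    (h₁.subperm_of_stable a deg h₂ hs₂).antisymm (h₂.subperm_of_stable a deg h₁ hs₁)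
  exact ⟨hperm.count_eq, toppleSeq_perm a deg hperm _⟩

/-- `stmt_13` (abelian property): any two maximal (i.e. stabilizing) sequences
of legal topplings of the same sandpile use each vertex the same number of
times and produce the same stable configuration. -/
theorem stmt_13 (V : Type) [Fintype V] [DecidableEq V]
    (a : Option V → Option V → ℕ)
    (hsymm : ∀ p q, a p q = a q p) (hloop : ∀ p, a p p = 0)
    (hconn : ∀ p q : Option V, Relation.ReflTransGen (fun p q => 0 < a p q) p q)
    (deg : Option V → ℕ) (hdeg : ∀ p, deg p = ∑ q : Option V, a p q)
    (η : V → ℕ) (l₁ l₂ : List V)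
    (h₁ : LegalSeq a deg (fun v => (η v : ℤ)) l₁)
    (h₂ : LegalSeq a deg (fun v => (η v : ℤ)) l₂)
    (hs₁ : StableConfig deg (toppleSeq a deg (fun v => (η v : ℤ)) l₁))
    (hs₂ : StableConfig deg (toppleSeq a deg (fun v => (η v : ℤ)) l₂)) :
    (∀ v : V, l₁.count v = l₂.count v) ∧
    toppleSeq a deg (fun v => (η v : ℤ)) l₁ =
      toppleSeq a deg (fun v => (η v : ℤ)) l₂ :=
  stmt_13_general V a deg η l₁ l₂ h₁ h₂ hs₁ hs₂
end
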